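/- arXiv:2205.00431 — 2 statements merged into one kernel-verified Lean document; each statement's English description precedes it below -/
import Mathlib

section
/- Consider the switched linear system ẇ = (I_N ⊗ A₀ − μ L_{σ(t)} ⊗ I_{n₀}) w, where each L_p is the Laplacian of a connected undirected graph, σ is piecewise constant, and μ ≥ ‖A₀‖/λ̲ + 1 with λ̲ = min_p λ₂(L_p) > 0. Then the disagreement vector w̃(t) = w(t) − 𝟏 ⊗ w_av(t), with w_av(t) = (1/N)Σᵢ wᵢ(t), satisfies ‖w̃(t)‖ ≤ ‖w̃(0)‖ e^{−λ̲ t} for all t ≥ 0. -/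
open Matrix Kronecker

/-!
`V = ∑ w̃²` is a common Lyapunov function for all modes. The consensus part `𝟏 ⊗ w_av` is mapped
by every generator `I ⊗ A₀ - μ L_p ⊗ I` to a consensus vector (because `L_p 𝟏 = 0`), and consensus
vectors are orthogonal to `w̃`; hence `V' = 2 ⟨w̃, (I ⊗ A₀ - μ L_σ ⊗ I) w̃⟩`. Blockwise,
`⟨w̃, (I ⊗ A₀) w̃⟩ ≤ ‖A₀‖ V`, and since every column of `w̃` sums to zero the spectral gap gives
`⟨w̃, (L_p ⊗ I) w̃⟩ ≥ λ̲ V` in every mode. So `V' ≤ 2 (‖A₀‖ - μ λ̲) V ≤ -2 λ̲ V`, and Grönwall's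
inequality yields `V t ≤ V 0 · e^{-2 λ̲ t}`.
-/

theorem dotProduct_mulVec_le_norm_toEuclideanCLM_mul {n : Type*} [Fintype n] [DecidableEq n]
    (A : Matrix n n ℝ) (x : n → ℝ) :
    x ⬝ᵥ (A *ᵥ x) ≤ ‖toEuclideanCLM (𝕜 := ℝ) A‖ * ∑ i, x i ^ 2 := by
  set T := toEuclideanCLM (𝕜 := ℝ) A
  set X : EuclideanSpace ℝ n := WithLp.toLp 2 x
  have hinner : x ⬝ᵥ (A *ᵥ x) = inner ℝ X (T X) := by
    simp [T, X, toEuclideanCLM_toLp, PiLp.inner_apply, dotProduct, mul_comm]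
  have hnorm : ‖X‖ ^ 2 = ∑ i, x i ^ 2 := by
    simp [X, EuclideanSpace.norm_sq_eq]
  calc x ⬝ᵥ (A *ᵥ x) ≤ ‖X‖ * ‖T X‖ := hinner ▸ real_inner_le_norm _ _
    _ ≤ ‖X‖ * (‖T‖ * ‖X‖) := by gcongr; exact T.le_opNorm X
    _ = ‖T‖ * ∑ i, x i ^ 2 := by rw [← hnorm]; ring

theorem hasDerivAt_sum_sq {ι : Type*} [Fintype ι] {f : ℝ → ι → ℝ} {f' : ι → ℝ} {t : ℝ}
    (hf : HasDerivAt f f' t) :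
    HasDerivAt (fun s => ∑ i, f s i ^ 2) (2 * (f t ⬝ᵥ f')) t := by
  simp only [dotProduct, Finset.mul_sum]
  refine HasDerivAt.fun_sum fun i _ => ?_
  convert! (hasDerivAt_pi.1 hf i).fun_pow 2 using 1
  ring

theorem le_mul_exp_of_hasDerivAt_le_mul {V V' : ℝ → ℝ} {c : ℝ}
    (hV : ∀ s, HasDerivAt V (V' s) s) (hle : ∀ s, V' s ≤ c * V s) {t : ℝ} (ht : 0 ≤ t) :
    V t ≤ V 0 * Real.exp (c * t) := by
  have := le_gronwallBound_of_liminf_deriv_right_le (f' := V') (K := c) (ε := 0) (δ := V 0)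
    (fun s _ => (hV s).continuousAt.continuousWithinAt)
    (fun s _ _ hr => (hV s).hasDerivWithinAt.liminf_right_slope_le hr) le_rfl
    (fun s _ => by simpa using hle s) t ⟨ht, le_rfl⟩
  rwa [gronwallBound_ε0, sub_zero] at this

section Kronecker

variable {ι κ R : Type*} [Fintype ι] [Fintype κ]

theorem one_kronecker_mulVec_apply [DecidableEq ι] [Semiring R] (B : Matrix κ κ R) (x : ι × κ → R)
    (i : ι) (k : κ) :
    (((1 : Matrix ι ι R) ⊗ₖ B) *ᵥ x) (i, k) = (B *ᵥ fun l => x (i, l)) k := by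
  simp [mulVec, dotProduct, Fintype.sum_prod_type, one_apply]

theorem kronecker_one_mulVec_apply [DecidableEq κ] [Semiring R] (A : Matrix ι ι R) (x : ι × κ → R)
    (i : ι) (k : κ) :
    ((A ⊗ₖ (1 : Matrix κ κ R)) *ᵥ x) (i, k) = (A *ᵥ fun j => x (j, k)) i := by
  simp [mulVec, dotProduct, Fintype.sum_prod_type, one_apply]

theorem dotProduct_one_kronecker_mulVec [DecidableEq ι] [Semiring R] (B : Matrix κ κ R)
    (x : ι × κ → R) :
    x ⬝ᵥ (((1 : Matrix ι ι R) ⊗ₖ B) *ᵥ x)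
      = ∑ i, (fun k => x (i, k)) ⬝ᵥ (B *ᵥ fun k => x (i, k)) := by
  simp only [dotProduct, Fintype.sum_prod_type, one_kronecker_mulVec_apply]

theorem dotProduct_kronecker_one_mulVec [DecidableEq κ] [Semiring R] (A : Matrix ι ι R)
    (x : ι × κ → R) :
    x ⬝ᵥ ((A ⊗ₖ (1 : Matrix κ κ R)) *ᵥ x)
      = ∑ k, (fun i => x (i, k)) ⬝ᵥ (A *ᵥ fun i => x (i, k)) := by
  simp only [dotProduct, Fintype.sum_prod_type_right, kronecker_one_mulVec_apply]

theorem one_kronecker_mulVec_comp_snd [DecidableEq ι] [Semiring R] (B : Matrix κ κ R) (v : κ → R) :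
    ((1 : Matrix ι ι R) ⊗ₖ B) *ᵥ (v ∘ Prod.snd) = (B *ᵥ v) ∘ Prod.snd := by
  ext ⟨i, k⟩
  exact one_kronecker_mulVec_apply B _ i k

theorem kronecker_one_mulVec_comp_snd_eq_zero [DecidableEq κ] [CommSemiring R] {A : Matrix ι ι R}
    (hA : A *ᵥ (fun _ => 1) = 0) (v : κ → R) :
    (A ⊗ₖ (1 : Matrix κ κ R)) *ᵥ (v ∘ Prod.snd) = 0 := by
  ext ⟨i, k⟩
  have : (fun j : ι => v k) = v k • fun _ => 1 := by ext; simp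
  simp [kronecker_one_mulVec_apply, this, mulVec_smul, hA]

theorem dotProduct_comp_snd_eq_zero [CommSemiring R] {x : ι × κ → R}
    (hx : ∀ k, ∑ i, x (i, k) = 0) (v : κ → R) : x ⬝ᵥ (v ∘ Prod.snd) = 0 := by
  simp [dotProduct, Fintype.sum_prod_type_right, ← Finset.sum_mul, hx]

end Kronecker

section Disagreement

variable {ι κ : Type*} [Fintype ι]

noncomputable def colAvg (x : ι × κ → ℝ) (k : κ) : ℝ :=
  (Fintype.card ι : ℝ)⁻¹ * ∑ i, x (i, k)

noncomputable def disagreement (x : ι × κ → ℝ) : ι × κ → ℝ :=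
  x - colAvg x ∘ Prod.snd

theorem disagreement_add_colAvg (x : ι × κ → ℝ) :
    disagreement x + colAvg x ∘ Prod.snd = x :=
  sub_add_cancel _ _

theorem sum_disagreement_apply [Nonempty ι] (x : ι × κ → ℝ) (k : κ) :
    ∑ i, disagreement x (i, k) = 0 := by
  have hcard : (Fintype.card ι : ℝ) ≠ 0 := Nat.cast_ne_zero.mpr Fintype.card_ne_zero
  simp only [disagreement, colAvg, Pi.sub_apply, Function.comp_apply, Finset.sum_sub_distrib,
    Finset.sum_const, Finset.card_univ, nsmul_eq_mul, mul_inv_cancel_left₀ hcard, sub_self]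

theorem HasDerivAt.disagreement {w : ℝ → ι × κ → ℝ} {w' : ι × κ → ℝ} {t : ℝ}
    (hw : HasDerivAt w w' t) :
    HasDerivAt (fun s => disagreement (w s)) (disagreement w') t := by
  have hwq (q : ι × κ) : HasDerivAt (fun s => w s q) (w' q) t := hasDerivAt_pi.1 hw q
  exact hasDerivAt_pi.2 fun q =>
    (hwq q).sub ((HasDerivAt.fun_sum fun i _ => hwq (i, q.2)).const_mul _)

theorem disagreement_dotProduct_disagreement [Fintype κ] [Nonempty ι] (x y : ι × κ → ℝ) :
    disagreement x ⬝ᵥ disagreement y = disagreement x ⬝ᵥ y := by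
  change disagreement x ⬝ᵥ (y - colAvg y ∘ Prod.snd) = _
  rw [dotProduct_sub, dotProduct_comp_snd_eq_zero (sum_disagreement_apply x), sub_zero]

end Disagreement

section ConsensusGenerator

variable {ι κ : Type*} [Fintype ι] [Fintype κ] [DecidableEq κ]

theorem dotProduct_one_kronecker_mulVec_le [DecidableEq ι] (A : Matrix κ κ ℝ) (x : ι × κ → ℝ) :
    x ⬝ᵥ (((1 : Matrix ι ι ℝ) ⊗ₖ A) *ᵥ x) ≤ ‖toEuclideanCLM (𝕜 := ℝ) A‖ * ∑ q, x q ^ 2 := by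
  rw [dotProduct_one_kronecker_mulVec, Fintype.sum_prod_type, Finset.mul_sum]
  exact Finset.sum_le_sum fun i _ => dotProduct_mulVec_le_norm_toEuclideanCLM_mul A _

theorem le_dotProduct_kronecker_one_mulVec {L : Matrix ι ι ℝ} {lam : ℝ}
    (hgap : ∀ y : ι → ℝ, ∑ i, y i = 0 → lam * ∑ i, y i ^ 2 ≤ y ⬝ᵥ (L *ᵥ y))
    {x : ι × κ → ℝ} (hx : ∀ k, ∑ i, x (i, k) = 0) :
    lam * ∑ q, x q ^ 2 ≤ x ⬝ᵥ ((L ⊗ₖ (1 : Matrix κ κ ℝ)) *ᵥ x) := by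
  rw [dotProduct_kronecker_one_mulVec, Fintype.sum_prod_type_right, Finset.mul_sum]
  exact Finset.sum_le_sum fun k _ => hgap _ (hx k)

theorem dotProduct_consensus_mulVec_le [DecidableEq ι] (A : Matrix κ κ ℝ) {L : Matrix ι ι ℝ}
    {lam μ : ℝ}
    (hgap : ∀ y : ι → ℝ, ∑ i, y i = 0 → lam * ∑ i, y i ^ 2 ≤ y ⬝ᵥ (L *ᵥ y)) (hμ : 0 ≤ μ)
    {x : ι × κ → ℝ} (hx : ∀ k, ∑ i, x (i, k) = 0) :
    x ⬝ᵥ ((1 ⊗ₖ A - μ • (L ⊗ₖ 1)) *ᵥ x)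
      ≤ (‖toEuclideanCLM (𝕜 := ℝ) A‖ - μ * lam) * ∑ q, x q ^ 2 := by
  rw [sub_mulVec, smul_mulVec, dotProduct_sub, dotProduct_smul, smul_eq_mul]
  have hA := dotProduct_one_kronecker_mulVec_le (ι := ι) A x
  have hL := mul_le_mul_of_nonneg_left (le_dotProduct_kronecker_one_mulVec hgap hx) hμ
  linarith

theorem disagreement_dotProduct_consensus_mulVec [DecidableEq ι] [Nonempty ι] (A : Matrix κ κ ℝ)
    {L : Matrix ι ι ℝ} (hL : L *ᵥ (fun _ => 1) = 0) (μ : ℝ) (x : ι × κ → ℝ) :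
    disagreement x ⬝ᵥ ((1 ⊗ₖ A - μ • (L ⊗ₖ 1)) *ᵥ x)
      = disagreement x ⬝ᵥ ((1 ⊗ₖ A - μ • (L ⊗ₖ 1)) *ᵥ disagreement x) := by
  have hconst : (1 ⊗ₖ A - μ • (L ⊗ₖ 1)) *ᵥ (colAvg x ∘ Prod.snd) = (A *ᵥ colAvg x) ∘ Prod.snd := by
    rw [sub_mulVec, smul_mulVec, one_kronecker_mulVec_comp_snd,
      kronecker_one_mulVec_comp_snd_eq_zero hL, smul_zero, sub_zero]
  conv_lhs => arg 2; rw [← disagreement_add_colAvg x]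
  rw [mulVec_add, dotProduct_add, hconst, dotProduct_comp_snd_eq_zero (sum_disagreement_apply x),
    add_zero]

end ConsensusGenerator

theorem switched_consensus_disagreement_decay_general {N n₀ p : ℕ} (hN : 0 < N)
    (A₀ : Matrix (Fin n₀) (Fin n₀) ℝ)
    (G : Fin p → SimpleGraph (Fin N)) [∀ q, DecidableRel (G q).Adj]
    (L : Fin p → Matrix (Fin N) (Fin N) ℝ) (hLdef : ∀ q, L q = (G q).lapMatrix ℝ)
    (lam : ℝ) (hlam : 0 < lam)
    (hgap : ∀ q, ∀ x : Fin N → ℝ, (∑ i, x i) = 0 →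
      lam * (∑ i, (x i) ^ 2) ≤ x ⬝ᵥ (L q).mulVec x)
    (μ : ℝ) (hμ : ‖Matrix.toEuclideanCLM (𝕜 := ℝ) A₀‖ / lam + 1 ≤ μ)
    (σ : ℝ → Fin p)
    (w : ℝ → Fin N × Fin n₀ → ℝ)
    (hw : ∀ t : ℝ, HasDerivAt w
      ((((1 : Matrix (Fin N) (Fin N) ℝ) ⊗ₖ A₀
          - μ • (L (σ t) ⊗ₖ (1 : Matrix (Fin n₀) (Fin n₀) ℝ))).mulVec (w t))) t)
    (wav : ℝ → Fin n₀ → ℝ)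
    (hwav : ∀ t k, wav t k = (N : ℝ)⁻¹ * ∑ i : Fin N, w t (i, k))
    (wtil : ℝ → Fin N × Fin n₀ → ℝ)
    (hwtil : ∀ t q, wtil t q = w t q - wav t q.2) :
    ∀ t : ℝ, 0 ≤ t →
      Real.sqrt (∑ q, (wtil t q) ^ 2)
        ≤ Real.sqrt (∑ q, (wtil 0 q) ^ 2) * Real.exp (-lam * t) := by
  have : Nonempty (Fin N) := ⟨⟨0, hN⟩⟩
  obtain rfl : wtil = fun s => disagreement (w s) := by
    funext s q
    simp [hwtil, hwav, disagreement, colAvg]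
  have hgain : ‖toEuclideanCLM (𝕜 := ℝ) A₀‖ - μ * lam ≤ -lam := by
    have := mul_le_mul_of_nonneg_right hμ hlam.le
    rw [add_mul, div_mul_cancel₀ _ hlam.ne', one_mul] at this
    linarith
  have hμ0 : 0 ≤ μ := le_trans (by positivity) hμ
  have hV (s : ℝ) := hasDerivAt_sum_sq (hw s).disagreement
  have hdecay (s : ℝ) : 2 * (disagreement (w s) ⬝ᵥ disagreement
      ((1 ⊗ₖ A₀ - μ • (L (σ s) ⊗ₖ 1)) *ᵥ w s))
      ≤ -(2 * lam) * ∑ q, disagreement (w s) q ^ 2 := by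
    rw [disagreement_dotProduct_disagreement, disagreement_dotProduct_consensus_mulVec A₀
      (hLdef (σ s) ▸ SimpleGraph.lapMatrix_mulVec_const_eq_zero _)]
    have := dotProduct_consensus_mulVec_le A₀ (hgap (σ s)) hμ0 (sum_disagreement_apply (w s))
    have hV0 : 0 ≤ ∑ q, disagreement (w s) q ^ 2 := by positivity
    linarith [mul_le_mul_of_nonneg_right hgain hV0]
  intro t ht
  have hVt := le_mul_exp_of_hasDerivAt_le_mul hV hdecay ht
  calc √(∑ q, disagreement (w t) q ^ 2)
      ≤ √((∑ q, disagreement (w 0) q ^ 2) * Real.exp (-(2 * lam) * t)) := Real.sqrt_le_sqrt hVt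
    _ = √(∑ q, disagreement (w 0) q ^ 2) * Real.exp (-lam * t) := by
      rw [Real.sqrt_mul (Finset.sum_nonneg fun q _ => sq_nonneg _), ← Real.exp_half]
      ring_nf

/-- Exponential decay of the disagreement vector for the switched consensus
generator `ẇ = (I_N ⊗ A₀ − μ L_{σ(t)} ⊗ I_{n₀}) w` over connected-graph
Laplacians, with coupling gain `μ ≥ ‖A₀‖/λ̲ + 1`. -/
theorem switched_consensus_disagreement_decay {N n₀ p : ℕ} (hN : 0 < N)
    (A₀ : Matrix (Fin n₀) (Fin n₀) ℝ)
    (G : Fin p → SimpleGraph (Fin N)) [∀ q, DecidableRel (G q).Adj]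
    (hconn : ∀ q, (G q).Connected)
    (L : Fin p → Matrix (Fin N) (Fin N) ℝ) (hLdef : ∀ q, L q = (G q).lapMatrix ℝ)
    (lam : ℝ) (hlam : 0 < lam)
    (hgap : ∀ q, ∀ x : Fin N → ℝ, (∑ i, x i) = 0 →
      lam * (∑ i, (x i) ^ 2) ≤ x ⬝ᵥ (L q).mulVec x)
    (μ : ℝ) (hμ : ‖Matrix.toEuclideanCLM (𝕜 := ℝ) A₀‖ / lam + 1 ≤ μ)
    (σ : ℝ → Fin p)
    (w : ℝ → Fin N × Fin n₀ → ℝ)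
    (hw : ∀ t : ℝ, HasDerivAt w
      ((((1 : Matrix (Fin N) (Fin N) ℝ) ⊗ₖ A₀
          - μ • (L (σ t) ⊗ₖ (1 : Matrix (Fin n₀) (Fin n₀) ℝ))).mulVec (w t))) t)
    (wav : ℝ → Fin n₀ → ℝ)
    (hwav : ∀ t k, wav t k = (N : ℝ)⁻¹ * ∑ i : Fin N, w t (i, k))
    (wtil : ℝ → Fin N × Fin n₀ → ℝ)
    (hwtil : ∀ t q, wtil t q = w t q - wav t q.2) :
    ∀ t : ℝ, 0 ≤ t →
      Real.sqrt (∑ q, (wtil t q) ^ 2)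
        ≤ Real.sqrt (∑ q, (wtil 0 q) ^ 2) * Real.exp (-lam * t) :=
  switched_consensus_disagreement_decay_general hN A₀ G L hLdef lam hlam hgap μ hμ σ w hw wav hwav
    wtil hwtil
end

section
/- If Q ≻ 0 is symmetric positive definite and QAᵀ + AQ − 2BBᵀ ≺ 0 (negative definite), then the matrix A − BBᵀQ^{-1} is Hurwitz (all eigenvalues have negative real part). -/
/-!
Put `K = A - BBᵀQ⁻¹`. Then `KQ + QKᵀ = QAᵀ + AQ - 2BBᵀ`, so `Q` is a Lyapunov certificate for `K`:
if `wᴴ K = μ wᴴ` with `w ≠ 0`, then `wᴴ (KQ + QKᵀ) w = 2 Re μ · wᴴ Q w`, where the left side is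
negative and `wᴴ Q w` is positive, hence `Re μ < 0`. Both definiteness hypotheses survive the
passage from `ℝ` to `ℂ`, because the real part of a complex quadratic form of a real matrix is the
sum of the real forms at the real and imaginary parts of the vector.
-/

open Matrix
open scoped ComplexOrder

namespace Matrix

variable {n : Type*} [Fintype n]

theorem exists_vecMul_eq_smul_of_mem_spectrum {K : Type*} [Field K] [DecidableEq n]
    {A : Matrix n n K} {μ : K} (hμ : μ ∈ spectrum K A) : ∃ w ≠ 0, w ᵥ* A = μ • w := by
  rw [spectrum.mem_iff, isUnit_iff_isUnit_det, isUnit_iff_ne_zero, not_not,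
    ← exists_vecMul_eq_zero_iff] at hμ
  obtain ⟨w, hw, hwA⟩ := hμ
  refine ⟨w, hw, ?_⟩
  rw [vecMul_sub, Algebra.algebraMap_eq_smul_one, vecMul_smul, vecMul_one, sub_eq_zero] at hwA
  exact hwA.symm

theorem re_star_dotProduct_map_ofReal_mulVec (M : Matrix n n ℝ) (x : n → ℂ) :
    (star x ⬝ᵥ M.map ((↑) : ℝ → ℂ) *ᵥ x).re =
      (fun i => (x i).re) ⬝ᵥ M *ᵥ (fun i => (x i).re) +
        (fun i => (x i).im) ⬝ᵥ M *ᵥ (fun i => (x i).im) := by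
  simp [dotProduct, mulVec, Complex.mul_re, Finset.mul_sum, Finset.sum_add_distrib]

theorem PosDef.map_ofReal {M : Matrix n n ℝ} (hM : M.PosDef) :
    (M.map ((↑) : ℝ → ℂ)).PosDef := by
  have hMc : (M.map ((↑) : ℝ → ℂ)).IsHermitian :=
    hM.isHermitian.map _ fun r => (Complex.conj_ofReal r).symm
  refine .of_dotProduct_mulVec_pos hMc fun x hx => RCLike.pos_iff.mpr
    ⟨?_, hMc.im_star_dotProduct_mulVec_self x⟩
  have hre_or_im : (fun i => (x i).re) ≠ 0 ∨ (fun i => (x i).im) ≠ 0 := by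
    by_contra! h
    exact hx (funext fun i => Complex.ext (congrFun h.1 i) (congrFun h.2 i))
  change 0 < (star x ⬝ᵥ M.map ((↑) : ℝ → ℂ) *ᵥ x).re
  rw [re_star_dotProduct_map_ofReal_mulVec]
  have hnonneg := hM.posSemidef.dotProduct_mulVec_nonneg
  rcases hre_or_im with hre | him
  · simpa using add_pos_of_pos_of_nonneg (hM.dotProduct_mulVec_pos hre) (hnonneg _)
  · simpa using add_pos_of_nonneg_of_pos (hnonneg _) (hM.dotProduct_mulVec_pos him)

theorem re_lt_zero_of_mem_spectrum_of_lyapunov {𝕜 : Type*} [RCLike 𝕜] [DecidableEq n]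
    {K P : Matrix n n 𝕜} (hP : P.PosDef) (hKP : (-(K * P + P * Kᴴ)).PosDef) {μ : 𝕜}
    (hμ : μ ∈ spectrum 𝕜 K) : RCLike.re μ < 0 := by
  obtain ⟨w, hw, hwK⟩ := exists_vecMul_eq_smul_of_mem_spectrum hμ
  set x := star w
  have hx : x ≠ 0 := star_ne_zero.mpr hw
  have hKx : Kᴴ *ᵥ x = star μ • x := by rw [← star_vecMul, hwK, star_smul]
  have hform : star x ⬝ᵥ (K * P + P * Kᴴ) *ᵥ x = (μ + star μ) * (star x ⬝ᵥ P *ᵥ x) := by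
    rw [add_mulVec, ← mulVec_mulVec, ← mulVec_mulVec, hKx, mulVec_smul, dotProduct_add,
      dotProduct_mulVec, star_star, hwK, smul_dotProduct, dotProduct_smul, smul_eq_mul,
      smul_eq_mul, add_mul]
  have hre : RCLike.re ((μ + star μ) * (star x ⬝ᵥ P *ᵥ x)) =
      2 * RCLike.re μ * RCLike.re (star x ⬝ᵥ P *ᵥ x) := by
    rw [RCLike.star_def, RCLike.add_conj, mul_assoc, RCLike.ofNat_mul_re, RCLike.re_ofReal_mul,
      mul_assoc]
  have hneg := hKP.re_dotProduct_pos hx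
  rw [neg_mulVec, dotProduct_neg, map_neg, hform, hre] at hneg
  nlinarith [hP.re_dotProduct_pos hx]

theorem sub_mul_transpose_mul_inv_lyapunov_eq {R : Type*} [CommRing R] [DecidableEq n]
    {m : Type*} [Fintype m] (A : Matrix n n R) (B : Matrix n m R) {Q : Matrix n n R}
    (hQ : Q.IsSymm) (hdet : IsUnit Q.det) :
    (A - B * Bᵀ * Q⁻¹) * Q + Q * (A - B * Bᵀ * Q⁻¹)ᵀ = Q * Aᵀ + A * Q - (2 : R) • (B * Bᵀ) := by
  rw [transpose_sub, transpose_mul, transpose_mul, transpose_nonsing_inv, hQ.eq,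
    transpose_transpose, sub_mul, mul_sub, Matrix.mul_assoc, nonsing_inv_mul _ hdet,
    ← Matrix.mul_assoc Q, mul_nonsing_inv _ hdet, Matrix.mul_one, Matrix.one_mul, two_smul]
  abel

end Matrix

/-- If `Q ≻ 0` and `QAᵀ + AQ − 2BBᵀ ≺ 0`, then `A − BBᵀQ⁻¹` is Hurwitz. -/
theorem state_feedback_hurwitz {n m : ℕ}
    (A : Matrix (Fin n) (Fin n) ℝ) (B : Matrix (Fin n) (Fin m) ℝ)
    (Q : Matrix (Fin n) (Fin n) ℝ) (hQ : Q.PosDef)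
    (hlyap : (-(Q * A.transpose + A * Q - (2 : ℝ) • (B * B.transpose))).PosDef) :
    ∀ μ : ℂ, μ ∈ spectrum ℂ ((A - B * B.transpose * Q⁻¹).map (Complex.ofReal)) →
      μ.re < 0 := by
  intro μ hμ
  set K := A - B * Bᵀ * Q⁻¹
  have hK : K * Q + Q * Kᵀ = Q * Aᵀ + A * Q - (2 : ℝ) • (B * Bᵀ) :=
    sub_mul_transpose_mul_inv_lyapunov_eq A B hQ.isHermitian hQ.det_pos.ne'.isUnit
  have hcomplexify : -(K.map (↑) * Q.map (↑) + Q.map (↑) * (K.map ((↑) : ℝ → ℂ))ᴴ) =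
      Complex.ofRealHom.mapMatrix (-(K * Q + Q * Kᵀ)) := by
    rw [← conjTranspose_map _ fun r => (Complex.conj_ofReal r).symm,
      conjTranspose_eq_transpose_of_trivial, map_neg, map_add, map_mul, map_mul]
    rfl
  refine re_lt_zero_of_mem_spectrum_of_lyapunov hQ.map_ofReal ?_ hμ
  rw [hcomplexify, hK]
  exact hlyap.map_ofReal
end
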